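/- arXiv:1609.03633 — 3 statements merged into one kernel-verified Lean document; each statement's English description precedes it below -/
import Mathlib

section
/- Let ℓ be a prime and N, K, δ be positive integers. Let α, β : ℕ → ℤ be sequences and define λ : ℕ → ℤ by λ(k) = Σ_{i=0}^{k} α(i)·β(k−i). Suppose: (i) δK is the minimal period of α modulo ℓ^N, i.e., α(n+δK) ≡ α(n) (mod ℓ^N) for all n ≥ 0 and no smaller positive integer has this property; (ii) β(0) ≡ 1 (mod ℓ^N); and (iii) β(m) ≡ 0 (mod ℓ^N) whenever m is not divisible by δ. Fix positive integers s, t and integers a_1,…,a_s and b_1,…,b_t with 0 ≤ a_i ≤ δ−1 and 0 ≤ b_j ≤ δ−1. If Σ_{i=1}^{s} λ(δn+a_i) ≡ Σ_{j=1}^{t} λ(δn+b_j) (mod ℓ^N) holds for all integers n with 0 ≤ n < K, then it holds for all integers n ≥ 0. -/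
/-!
Work in `ZMod (ℓ ^ N)`. Since `β` vanishes off the multiples of `δ`, for `0 ≤ c < δ` the value
`λ(δn + c)` only involves `α` on the residue class of `c`:
`λ(δn + c) = ∑_{j ≤ n} α(δj + c) β(δ(n - j))`. So with `D(n) = ∑ α(δn + a_i) - ∑ α(δn + b_j)`,
the difference of the two sides at `n` is `∑_{j ≤ n} D(j) β(δ(n - j))`. As `β(0) = 1`, this
triangular system forces `D = 0` on `[0, K)`; and `D` is `K`-periodic because `α` is
`δK`-periodic, so `D` vanishes identically.
-/

open Finset

section Convolution

variable {R : Type*}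

theorem sum_range_mul_sub_eq_sum_residue [NonUnitalNonAssocSemiring R] {A B : ℕ → R}
    {δ c : ℕ} (hc : c < δ) (hB : ∀ m, ¬ δ ∣ m → B m = 0) (n : ℕ) :
    ∑ i ∈ range (δ * n + c + 1), A i * B (δ * n + c - i) =
      ∑ j ∈ range (n + 1), A (δ * j + c) * B (δ * (n - j)) := by
  have hδ : 0 < δ := by omega
  have hinj : Set.InjOn (fun j => δ * j + c) (range (n + 1) : Set ℕ) := fun x _ y _ h =>
    Nat.eq_of_mul_eq_mul_left hδ (by simpa using h)
  have hreindex : ∑ j ∈ range (n + 1), A (δ * j + c) * B (δ * (n - j)) =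
      ∑ i ∈ (range (n + 1)).image (fun j => δ * j + c), A i * B (δ * n + c - i) := by
    rw [sum_image hinj]
    refine sum_congr rfl fun j _ => ?_
    rw [Nat.mul_sub, Nat.add_sub_add_right]
  rw [hreindex]
  refine (sum_subset (fun i hi => ?_) fun i hi hi' => ?_).symm
  · obtain ⟨j, hj, rfl⟩ := mem_image.mp hi
    have : δ * j ≤ δ * n := Nat.mul_le_mul_left δ (by simpa [Nat.lt_succ_iff] using hj)
    simp only [mem_range]
    omega
  · refine mul_eq_zero_of_right _ (hB _ fun ⟨m, hm⟩ => hi' ?_)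
    rw [mem_range] at hi
    have hmn : m ≤ n := Nat.lt_succ_iff.mp <| Nat.lt_of_mul_lt_mul_left (a := δ) <| by
      rw [Nat.mul_succ]; omega
    have : δ * m ≤ δ * n := Nat.mul_le_mul_left δ hmn
    refine mem_image.mpr ⟨n - m, mem_range.mpr (by omega), ?_⟩
    rw [Nat.mul_sub]
    omega

theorem eq_zero_of_sum_range_mul_eq_zero [Semiring R] {D C : ℕ → R} {K : ℕ} (hC : C 0 = 1)
    (h : ∀ n < K, ∑ j ∈ range (n + 1), D j * C (n - j) = 0) : ∀ n < K, D n = 0 := by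
  intro n
  induction n using Nat.strong_induction_on with
  | _ n ih =>
    intro hn
    have hlower : ∀ j ∈ range n, D j * C (n - j) = 0 := fun j hj => by
      rw [ih j (mem_range.mp hj) ((mem_range.mp hj).trans hn), zero_mul]
    simpa [sum_range_succ, sum_eq_zero hlower, hC] using h n hn

theorem Function.Periodic.eq_zero_of_forall_lt [Zero R] {D : ℕ → R} {K : ℕ}
    (hD : Function.Periodic D K) (hK : 0 < K) (h : ∀ n < K, D n = 0) (n : ℕ) : D n = 0 := by
  rw [← hD.map_mod_nat]
  exact h _ (Nat.mod_lt n hK)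

end Convolution

section Decimation

variable {R ι : Type*} [Ring R] [Fintype ι] {A B L : ℕ → R} {δ : ℕ}

theorem sum_residues_eq_sum_range_mul (hL : ∀ k, L k = ∑ i ∈ range (k + 1), A i * B (k - i))
    (hB : ∀ m, ¬ δ ∣ m → B m = 0) {a : ι → ℕ} (ha : ∀ i, a i < δ) (n : ℕ) :
    ∑ i, L (δ * n + a i) = ∑ j ∈ range (n + 1), (∑ i, A (δ * j + a i)) * B (δ * (n - j)) := by
  simp only [hL, sum_range_mul_sub_eq_sum_residue (ha _) hB, sum_mul]
  exact sum_comm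

theorem sum_residues_eq_of_forall_lt {κ : Type*} [Fintype κ] {K : ℕ} (hK : 0 < K)
    (hL : ∀ k, L k = ∑ i ∈ range (k + 1), A i * B (k - i))
    (hA : Function.Periodic A (δ * K)) (hB0 : B 0 = 1) (hB : ∀ m, ¬ δ ∣ m → B m = 0)
    {a : ι → ℕ} {b : κ → ℕ} (ha : ∀ i, a i < δ) (hb : ∀ j, b j < δ)
    (hsmall : ∀ n < K, ∑ i, L (δ * n + a i) = ∑ j, L (δ * n + b j)) (n : ℕ) :
    ∑ i, L (δ * n + a i) = ∑ j, L (δ * n + b j) := by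
  set D : ℕ → R := fun n => ∑ i, A (δ * n + a i) - ∑ j, A (δ * n + b j)
  have hdiff : ∀ n, ∑ i, L (δ * n + a i) - ∑ j, L (δ * n + b j) =
      ∑ j ∈ range (n + 1), D j * B (δ * (n - j)) := fun n => by
    simp only [D, sum_residues_eq_sum_range_mul hL hB ha, sum_residues_eq_sum_range_mul hL hB hb,
      sub_mul, sum_sub_distrib]
  have hDper : Function.Periodic D K := fun n => by
    simp only [D, Nat.mul_add, add_right_comm _ (δ * K), hA _]
  have hDsmall : ∀ n < K, D n = 0 :=
    eq_zero_of_sum_range_mul_eq_zero (C := fun m => B (δ * m)) (by simpa using hB0)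
      fun n hn => by rw [← hdiff, sub_eq_zero.mpr (hsmall n hn)]
  rw [← sub_eq_zero, hdiff]
  exact sum_eq_zero fun j _ => by rw [hDper.eq_zero_of_forall_lt hK hDsmall, zero_mul]

end Decimation

theorem stmt0_general (ℓ N K δ : ℕ) (hK : 0 < K) (hδ : 0 < δ)
    (α β lam : ℕ → ℤ)
    (hlam : ∀ k : ℕ, lam k = ∑ i ∈ Finset.range (k + 1), α i * β (k - i))
    (hper : ∀ n : ℕ, α (n + δ * K) ≡ α n [ZMOD ((ℓ : ℤ) ^ N)])
    (hβ0 : β 0 ≡ 1 [ZMOD ((ℓ : ℤ) ^ N)])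
    (hβ : ∀ m : ℕ, ¬ δ ∣ m → β m ≡ 0 [ZMOD ((ℓ : ℤ) ^ N)])
    (s t : ℕ)
    (a : Fin s → ℕ) (b : Fin t → ℕ)
    (ha : ∀ i, a i ≤ δ - 1) (hb : ∀ j, b j ≤ δ - 1)
    (hsmall : ∀ n : ℕ, n < K →
      (∑ i, lam (δ * n + a i)) ≡ (∑ j, lam (δ * n + b j)) [ZMOD ((ℓ : ℤ) ^ N)]) :
    ∀ n : ℕ, (∑ i, lam (δ * n + a i)) ≡ (∑ j, lam (δ * n + b j)) [ZMOD ((ℓ : ℤ) ^ N)] := by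
  have hcast (x y : ℤ) : x ≡ y [ZMOD ((ℓ : ℤ) ^ N)] ↔ (x : ZMod (ℓ ^ N)) = y := by
    rw [ZMod.intCast_eq_intCast_iff, Nat.cast_pow]
  intro n
  rw [hcast]
  push_cast
  refine sum_residues_eq_of_forall_lt (A := fun k => (α k : ZMod (ℓ ^ N)))
    (B := fun k => (β k : ZMod (ℓ ^ N))) (L := fun k => (lam k : ZMod (ℓ ^ N))) hK
    (fun k => by simp [hlam]) (fun k => (hcast _ _).mp (hper k)) (by simpa using (hcast _ _).mp hβ0)
    (fun m hm => by simpa using (hcast _ _).mp (hβ m hm))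
    (fun i => by have := ha i; omega) (fun j => by have := hb j; omega)
    (fun k hk => by simpa using (hcast _ _).mp (hsmall k hk)) n

theorem stmt0 (ℓ N K δ : ℕ) (hℓ : Nat.Prime ℓ) (hN : 0 < N) (hK : 0 < K) (hδ : 0 < δ)
    (α β lam : ℕ → ℤ)
    (hlam : ∀ k : ℕ, lam k = ∑ i ∈ Finset.range (k + 1), α i * β (k - i))
    (hper : ∀ n : ℕ, α (n + δ * K) ≡ α n [ZMOD ((ℓ : ℤ) ^ N)])
    (hmin : ∀ d : ℕ, 0 < d → (∀ n : ℕ, α (n + d) ≡ α n [ZMOD ((ℓ : ℤ) ^ N)]) → δ * K ≤ d)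
    (hβ0 : β 0 ≡ 1 [ZMOD ((ℓ : ℤ) ^ N)])
    (hβ : ∀ m : ℕ, ¬ δ ∣ m → β m ≡ 0 [ZMOD ((ℓ : ℤ) ^ N)])
    (s t : ℕ) (hs : 0 < s) (ht : 0 < t)
    (a : Fin s → ℕ) (b : Fin t → ℕ)
    (ha : ∀ i, a i ≤ δ - 1) (hb : ∀ j, b j ≤ δ - 1)
    (hsmall : ∀ n : ℕ, n < K →
      (∑ i, lam (δ * n + a i)) ≡ (∑ j, lam (δ * n + b j)) [ZMOD ((ℓ : ℤ) ^ N)]) :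
    ∀ n : ℕ, (∑ i, lam (δ * n + a i)) ≡ (∑ j, lam (δ * n + b j)) [ZMOD ((ℓ : ℤ) ^ N)] :=
  stmt0_general ℓ N K δ hK hδ α β lam hlam hper hβ0 hβ s t a b ha hb hsmall
end

section
/- For all integers n ≥ 0, \overline{pl}_4(4n+1) + \overline{pl}_4(4n+2) + \overline{pl}_4(4n+3) ≡ 0 (mod 4). -/
/-- `plBar k n` counts 2k-tuples `(D₁,…,D_k,P₁,…,P_k)` where `D_i` is a partition
into distinct parts all of size at least `i`, `P_i` is a partition with all parts
of size at least `i` (here `i` ranges over `1,…,k`, encoded by `Fin k` shifted by one),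
and the sizes sum to `n`.  This is the number of plane overpartitions of `n`
with at most `k` rows. -/
noncomputable def plBar (k n : ℕ) : ℕ :=
  Nat.card {DP : (Fin k → Multiset ℕ) × (Fin k → Multiset ℕ) //
    (∀ i, (DP.1 i).Nodup) ∧
    (∀ i, ∀ x ∈ DP.1 i, (i : ℕ) + 1 ≤ x) ∧
    (∀ i, ∀ x ∈ DP.2 i, (i : ℕ) + 1 ≤ x) ∧
    (∑ i, (DP.1 i).sum) + (∑ i, (DP.2 i).sum) = n}


/-!
Row `i` of a plane overpartition contributes `Rᵢ = ∏_{m > i} (1 + qᵐ)/(1 - qᵐ)`, and peeling off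
the factor `m = i + 1` gives `Rᵢ = U_{i+1} R_{i+1}` with
`U_k = (1 + qᵏ)/(1 - qᵏ) = 1 + 2 ∑_{j ≥ 1} q^{jk}`. Hence the generating function of `plBar 4` is
`R₀R₁R₂R₃ = U₁U₃R₁²R₃²`. Modulo 4 every `U_k² ≡ 1`, so `Rₜ² ≡ R_{t+d}²` for all `d`, which is `1`
up to degree `t + d`; thus `Rₜ² ≡ 1`, and `U₁U₃ ≡ U₁ + U₃ - 1`. For `n ≥ 1` this gives
`plBar 4 n ≡ 2 + 2·[3 ∣ n] (mod 4)`, and exactly one of three consecutive integers is divisible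
by 3, so the three terms add up to `8 ≡ 0`.
-/

open Finset PowerSeries

section WeightGF

variable (R : Type*) [CommSemiring R] {α β : Type*}

-- Only meaningful when all fibres of `w` are finite: `Nat.card` of an infinite type is `0`.
noncomputable def weightGF (w : α → ℕ) : R⟦X⟧ :=
  PowerSeries.mk fun n => (Nat.card {a // w a = n} : R)

variable {R}

@[simp]
theorem coeff_weightGF (w : α → ℕ) (n : ℕ) :
    coeff n (weightGF R w) = Nat.card {a // w a = n} :=
  coeff_mk _ _

def fibreCongr {w : α → ℕ} {w' : β → ℕ} (e : α ≃ β) (h : ∀ a, w' (e a) = w a)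
    (n : ℕ) : {a // w a = n} ≃ {b // w' b = n} :=
  e.subtypeEquiv fun a => by rw [h]

theorem weightGF_congr {w : α → ℕ} {w' : β → ℕ} (e : α ≃ β) (h : ∀ a, w' (e a) = w a) :
    weightGF R w' = weightGF R w := by
  ext n
  simp only [coeff_weightGF, Nat.card_congr (fibreCongr e h n)]

def fibreProdEquiv (w₁ : α → ℕ) (w₂ : β → ℕ) (n : ℕ) :
    {p : α × β // w₁ p.1 + w₂ p.2 = n} ≃
      Σ ij : antidiagonal n, {a // w₁ a = ij.1.1} × {b // w₂ b = ij.1.2} where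
  toFun p := ⟨⟨(w₁ p.1.1, w₂ p.1.2), mem_antidiagonal.2 p.2⟩, ⟨p.1.1, rfl⟩, ⟨p.1.2, rfl⟩⟩
  invFun x := ⟨(x.2.1.1, x.2.2.1), by rw [x.2.1.2, x.2.2.2]; exact mem_antidiagonal.1 x.1.2⟩
  left_inv _ := rfl
  right_inv := by
    rintro ⟨⟨⟨i, j⟩, h⟩, ⟨a, ha⟩, ⟨b, hb⟩⟩
    dsimp only at ha hb
    subst ha hb
    rfl

variable {w₁ : α → ℕ} {w₂ : β → ℕ}

theorem finite_fibre_prod (h₁ : ∀ n, Finite {a // w₁ a = n}) (h₂ : ∀ n, Finite {b // w₂ b = n})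
    (n : ℕ) : Finite {p : α × β // w₁ p.1 + w₂ p.2 = n} :=
  .of_equiv _ (fibreProdEquiv w₁ w₂ n).symm

theorem weightGF_prod (h₁ : ∀ n, Finite {a // w₁ a = n}) (h₂ : ∀ n, Finite {b // w₂ b = n}) :
    weightGF R (fun p : α × β => w₁ p.1 + w₂ p.2) = weightGF R w₁ * weightGF R w₂ := by
  ext n
  rw [coeff_weightGF, coeff_mul, Nat.card_congr (fibreProdEquiv w₁ w₂ n), Nat.card_sigma,
    ← sum_coe_sort (antidiagonal n)]
  push_cast [Nat.card_prod, coeff_weightGF]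
  rfl

theorem sum_weight_consEquiv {k : ℕ} {α : Fin (k + 1) → Type*} (w : ∀ i, α i → ℕ)
    (x : α 0 × ∀ i : Fin k, α i.succ) :
    ∑ i, w i (Fin.consEquiv α x i) = w 0 x.1 + ∑ i : Fin k, w i.succ (x.2 i) := by
  simp [Fin.sum_univ_succ, Fin.consEquiv]

theorem finite_fibre_pi {k : ℕ} {α : Fin k → Type*} {w : ∀ i, α i → ℕ}
    (hw : ∀ i n, Finite {a // w i a = n}) (n : ℕ) :
    Finite {f : ∀ i, α i // ∑ i, w i (f i) = n} := by
  induction k generalizing n with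
  | zero => infer_instance
  | succ k ih =>
    have := finite_fibre_prod (hw 0) (ih (fun i => hw i.succ)) n
    exact .of_equiv _ (fibreCongr (Fin.consEquiv α) (sum_weight_consEquiv w) n)

theorem weightGF_pi {k : ℕ} {α : Fin k → Type*} {w : ∀ i, α i → ℕ}
    (hw : ∀ i n, Finite {a // w i a = n}) :
    weightGF R (fun f : ∀ i, α i => ∑ i, w i (f i)) = ∏ i, weightGF R (w i) := by
  induction k with
  | zero =>
    ext n
    rw [coeff_weightGF, Fin.prod_univ_zero, coeff_one]
    split_ifs with hn
    · subst hn; simp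
    · simp [Ne.symm hn]
  | succ k ih =>
    rw [weightGF_congr (w' := fun f : ∀ i, α i => ∑ i, w i (f i)) (Fin.consEquiv α)
        (sum_weight_consEquiv w),
      weightGF_prod (hw 0) (finite_fibre_pi fun i => hw i.succ), ih fun i => hw i.succ,
      Fin.prod_univ_succ]

end WeightGF

theorem Multiset.replicate_count_add_filter_lt {a : ℕ} {m : Multiset ℕ} (h : ∀ x ∈ m, a ≤ x) :
    replicate (m.count a) a + m.filter (a < ·) = m := by
  conv_rhs => rw [← filter_add_not (· = a) m]
  rw [filter_eq' m a]
  congr 1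
  apply filter_congr
  intro x hx
  have := h x hx
  omega

theorem Multiset.filter_lt_replicate_add {a : ℕ} {c : ℕ} {m : Multiset ℕ} (h : ∀ x ∈ m, a < x) :
    (replicate c a + m).filter (a < ·) = m := by
  rw [filter_add, filter_eq_self.2 h, filter_eq_nil.2 fun x hx => by
    rw [eq_of_mem_replicate hx]; exact lt_irrefl a, zero_add]

theorem Multiset.eq_zero_of_lt_of_sum_le {t : ℕ} {m : Multiset ℕ} (h : ∀ x ∈ m, t < x)
    (hsum : m.sum ≤ t) : m = 0 :=
  Multiset.eq_zero_of_forall_notMem fun x hx =>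
    (h x hx).not_ge ((Multiset.le_sum_of_mem hx).trans hsum)

def Parts (t : ℕ) : Type := {m : Multiset ℕ // ∀ x ∈ m, t < x}

def DistinctParts (t : ℕ) : Type := {m : Multiset ℕ // m.Nodup ∧ ∀ x ∈ m, t < x}

theorem Parts.mem_replicate_add {t c : ℕ} {m : Multiset ℕ} (h : ∀ x ∈ m, t + 1 < x) :
    ∀ x ∈ Multiset.replicate c (t + 1) + m, t < x := by
  intro x hx
  rcases Multiset.mem_add.1 hx with hx | hx
  · rw [Multiset.eq_of_mem_replicate hx]; exact lt_add_one t
  · exact (lt_add_one t).trans (h x hx)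

def Parts.succEquiv (t : ℕ) : ℕ × Parts (t + 1) ≃ Parts t where
  toFun p := ⟨Multiset.replicate p.1 (t + 1) + p.2.1, Parts.mem_replicate_add p.2.2⟩
  invFun m :=
    (m.1.count (t + 1), ⟨m.1.filter (t + 1 < ·), fun _ hx => (Multiset.mem_filter.1 hx).2⟩)
  left_inv := by
    rintro ⟨c, m, hm⟩
    have hnot : t + 1 ∉ m := fun h => lt_irrefl _ (hm _ h)
    simp only [Multiset.count_add, Multiset.count_replicate_self,
      Multiset.count_eq_zero_of_notMem hnot, add_zero, Multiset.filter_lt_replicate_add hm]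
  right_inv m := Subtype.ext (Multiset.replicate_count_add_filter_lt m.2)

theorem Parts.sum_succEquiv (t : ℕ) (p : ℕ × Parts (t + 1)) :
    (Parts.succEquiv t p).1.sum = (t + 1) * p.1 + p.2.1.sum := by
  change (Multiset.replicate p.1 (t + 1) + p.2.1).sum = _
  rw [Multiset.sum_add, Multiset.sum_replicate, smul_eq_mul, mul_comm]

def DistinctParts.succEquiv (t : ℕ) : Bool × DistinctParts (t + 1) ≃ DistinctParts t where
  toFun p := ⟨Multiset.replicate p.1.toNat (t + 1) + p.2.1, by
      obtain ⟨b, m, hnd, hm⟩ := p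
      have hnot : t + 1 ∉ m := fun h => lt_irrefl _ (hm _ h)
      cases b
      · simpa using hnd
      · simpa [hnot] using hnd,
    Parts.mem_replicate_add p.2.2.2⟩
  invFun m := (decide (t + 1 ∈ m.1),
    ⟨m.1.filter (t + 1 < ·), m.2.1.filter _, fun _ hx => (Multiset.mem_filter.1 hx).2⟩)
  left_inv := by
    rintro ⟨b, m, hnd, hm⟩
    have hnot : t + 1 ∉ m := fun h => lt_irrefl _ (hm _ h)
    refine Prod.ext ?_ (Subtype.ext (Multiset.filter_lt_replicate_add hm))
    cases b <;> simp [hnot]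
  right_inv := by
    rintro ⟨m, hnd, hm⟩
    refine Subtype.ext ?_
    dsimp only
    convert Multiset.replicate_count_add_filter_lt hm using 3
    by_cases h : t + 1 ∈ m
    · simp [h, Multiset.count_eq_one_of_mem hnd h]
    · simp [h]

theorem DistinctParts.sum_succEquiv (t : ℕ) (p : Bool × DistinctParts (t + 1)) :
    (DistinctParts.succEquiv t p).1.sum = (t + 1) * p.1.toNat + p.2.1.sum := by
  change (Multiset.replicate p.1.toNat (t + 1) + p.2.1).sum = _
  rw [Multiset.sum_add, Multiset.sum_replicate, smul_eq_mul, mul_comm]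

theorem Parts.finite_fibre (t n : ℕ) : Finite {m : Parts t // m.1.sum = n} :=
  .of_injective (fun m => (⟨m.1.1, fun h => (Nat.zero_le t).trans_lt (m.1.2 _ h), m.2⟩ :
    n.Partition)) fun _ _ h => Subtype.ext (Subtype.ext (congrArg Nat.Partition.parts h))

theorem DistinctParts.finite_fibre (t n : ℕ) : Finite {m : DistinctParts t // m.1.sum = n} :=
  .of_injective (fun m => (⟨m.1.1, fun h => (Nat.zero_le t).trans_lt (m.1.2.2 _ h), m.2⟩ :
    n.Partition)) fun _ _ h => Subtype.ext (Subtype.ext (congrArg Nat.Partition.parts h))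

section Rows

def Row (t : ℕ) : Type := DistinctParts t × Parts t

def rowWeight (t : ℕ) (r : Row t) : ℕ := r.1.1.sum + r.2.1.sum

-- `(b, c)` records whether `k` is a distinct part and how often it is an ordinary part.
def unitWeight (k : ℕ) (u : Bool × ℕ) : ℕ := k * (u.1.toNat + u.2)

def Row.succEquiv (t : ℕ) : (Bool × ℕ) × Row (t + 1) ≃ Row t :=
  (Equiv.prodProdProdComm _ _ _ _).trans
    (Equiv.prodCongr (DistinctParts.succEquiv t) (Parts.succEquiv t))

theorem rowWeight_succEquiv (t : ℕ) (x : (Bool × ℕ) × Row (t + 1)) :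
    rowWeight t (Row.succEquiv t x) = unitWeight (t + 1) x.1 + rowWeight (t + 1) x.2 := by
  obtain ⟨⟨b, c⟩, d, p⟩ := x
  change (DistinctParts.succEquiv t (b, d)).1.sum + (Parts.succEquiv t (c, p)).1.sum = _
  rw [DistinctParts.sum_succEquiv, Parts.sum_succEquiv, unitWeight, rowWeight]
  ring

theorem finite_fibre_rowWeight (t n : ℕ) : Finite {r // rowWeight t r = n} :=
  finite_fibre_prod (DistinctParts.finite_fibre t) (Parts.finite_fibre t) n

theorem finite_fibre_unitWeight {k : ℕ} (hk : 0 < k) (n : ℕ) :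
    Finite {u // unitWeight k u = n} :=
  .of_injective (fun u => (u.1.1, (⟨u.1.2, by
      have := u.2; simp only [unitWeight] at this; nlinarith⟩ : Fin (n + 1))))
    fun u u' h => by
      simp only [Prod.mk.injEq, Fin.mk.injEq] at h
      exact Subtype.ext (Prod.ext h.1 h.2)

theorem card_fibre_rowWeight_of_le {t n : ℕ} (hn : n ≤ t) :
    Nat.card {r // rowWeight t r = n} = if n = 0 then 1 else 0 := by
  have hempty : ∀ r : Row t, rowWeight t r = n → r.1.1 = 0 ∧ r.2.1 = 0 := fun r hr => by
    unfold rowWeight at hr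
    exact ⟨Multiset.eq_zero_of_lt_of_sum_le r.1.2.2 (by omega),
      Multiset.eq_zero_of_lt_of_sum_le r.2.2 (by omega)⟩
  split_ifs with h0
  · subst h0
    refine Nat.card_eq_one_iff_exists.2 ⟨⟨(⟨0, by simp⟩, ⟨0, by simp⟩), rfl⟩, ?_⟩
    rintro ⟨r, hr⟩
    obtain ⟨h1, h2⟩ := hempty r hr
    exact Subtype.ext (Prod.ext (Subtype.ext h1) (Subtype.ext h2))
  · have : IsEmpty {r // rowWeight t r = n} := ⟨fun ⟨r, hr⟩ => h0 <| by
      rw [← hr, rowWeight, (hempty r hr).1, (hempty r hr).2]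
      rfl⟩
    exact Nat.card_of_isEmpty

theorem card_fibre_unitWeight {k : ℕ} (hk : 0 < k) (n : ℕ) :
    Nat.card {u // unitWeight k u = n} = if n = 0 then 1 else if k ∣ n then 2 else 0 := by
  split_ifs with h0 hdvd
  · subst h0
    refine Nat.card_eq_one_iff_exists.2 ⟨⟨(false, 0), by simp [unitWeight]⟩, ?_⟩
    rintro ⟨⟨b, c⟩, h⟩
    have : b.toNat + c = 0 := by simpa [unitWeight, hk.ne'] using h
    obtain ⟨hb, rfl⟩ := Nat.add_eq_zero_iff.1 this
    cases b
    · rfl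
    · simp at hb
  · obtain ⟨m, rfl⟩ := hdvd
    have hm : m ≠ 0 := by rintro rfl; simp at h0
    have e : {u // unitWeight k u = k * m} ≃ Bool :=
      { toFun := fun u => u.1.1
        invFun := fun b => ⟨(b, m - b.toNat), by
          have := Bool.toNat_le b
          change k * (b.toNat + (m - b.toNat)) = k * m
          congr 1
          omega⟩
        left_inv := by
          rintro ⟨⟨b, c⟩, h⟩
          have : b.toNat + c = m := Nat.eq_of_mul_eq_mul_left hk h
          refine Subtype.ext (Prod.ext rfl ?_)
          change m - b.toNat = c
          omega
        right_inv := fun _ => rfl }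
    rw [Nat.card_congr e, Nat.card_eq_fintype_card, Fintype.card_bool]
  · have : IsEmpty {u // unitWeight k u = n} := ⟨fun ⟨_, hu⟩ => hdvd ⟨_, hu.symm⟩⟩
    exact Nat.card_of_isEmpty

variable (R : Type*) [CommSemiring R]

theorem weightGF_rowWeight (t : ℕ) :
    weightGF R (rowWeight t) =
      weightGF R (unitWeight (t + 1)) * weightGF R (rowWeight (t + 1)) := by
  rw [← weightGF_prod (finite_fibre_unitWeight t.succ_pos) (finite_fibre_rowWeight (t + 1))]
  exact weightGF_congr (Row.succEquiv t) (rowWeight_succEquiv t)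

theorem coeff_weightGF_unitWeight {k : ℕ} (hk : 0 < k) (n : ℕ) :
    coeff n (weightGF R (unitWeight k)) = if n = 0 then 1 else if k ∣ n then 2 else 0 := by
  rw [coeff_weightGF, card_fibre_unitWeight hk]
  split_ifs <;> simp

end Rows

section ModFour

variable {A : Type*} [CommRing A]

theorem mul_eq_add_sub_one_of_two_dvd_sub_one (h4 : (4 : A) = 0) {a b : A} (ha : 2 ∣ a - 1)
    (hb : 2 ∣ b - 1) : a * b = a + b - 1 := by
  obtain ⟨c, hc⟩ := ha
  obtain ⟨d, hd⟩ := hb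
  linear_combination (b - 1) * hc + 2 * c * hd + c * d * h4

theorem sq_eq_one_of_two_dvd_sub_one (h4 : (4 : A) = 0) {a : A} (ha : 2 ∣ a - 1) :
    a ^ 2 = 1 := by
  obtain ⟨c, hc⟩ := ha
  linear_combination (a + 1 + 2 * c) * hc + (c ^ 2 + c) * h4

theorem zmodFour_powerSeries_four_eq_zero : (4 : (ZMod 4)⟦X⟧) = 0 := by
  rw [← map_ofNat C 4, show (OfNat.ofNat 4 : ZMod 4) = 0 from rfl, map_zero]

theorem two_dvd_weightGF_unitWeight_sub_one {k : ℕ} (hk : 0 < k) :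
    (2 : A⟦X⟧) ∣ weightGF A (unitWeight k) - 1 := by
  refine ⟨PowerSeries.mk fun n => if n = 0 then 0 else if k ∣ n then 1 else 0, ?_⟩
  ext n
  rw [← map_ofNat (C (R := A)) 2, coeff_C_mul, coeff_mk, map_sub, coeff_weightGF_unitWeight A hk,
    coeff_one]
  split_ifs <;> norm_num

theorem X_pow_dvd_weightGF_rowWeight_sub_one (t : ℕ) :
    (X : A⟦X⟧) ^ (t + 1) ∣ weightGF A (rowWeight t) - 1 := by
  refine X_pow_dvd_iff.2 fun n hn => ?_
  rw [map_sub, coeff_weightGF, card_fibre_rowWeight_of_le (Nat.lt_succ_iff.1 hn), coeff_one]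
  split_ifs <;> simp

theorem weightGF_rowWeight_sq (t : ℕ) : weightGF (ZMod 4) (rowWeight t) ^ 2 = 1 := by
  have hstep (s : ℕ) :
      weightGF (ZMod 4) (rowWeight s) ^ 2 = weightGF (ZMod 4) (rowWeight (s + 1)) ^ 2 := by
    rw [weightGF_rowWeight, mul_pow, sq_eq_one_of_two_dvd_sub_one zmodFour_powerSeries_four_eq_zero
      (two_dvd_weightGF_unitWeight_sub_one s.succ_pos), one_mul]
  have hshift (d : ℕ) :
      weightGF (ZMod 4) (rowWeight t) ^ 2 = weightGF (ZMod 4) (rowWeight (t + d)) ^ 2 := by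
    induction d with
    | zero => rfl
    | succ d ih => rw [ih, hstep]; rfl
  ext n
  -- all parts of a row of index `t + n` exceed `n`
  have hdvd :
      (X : (ZMod 4)⟦X⟧) ^ (t + n + 1) ∣ weightGF (ZMod 4) (rowWeight (t + n)) ^ 2 - 1 := by
    rw [sq, mul_self_sub_one]
    exact dvd_mul_of_dvd_right (X_pow_dvd_weightGF_rowWeight_sub_one _) _
  have := X_pow_dvd_iff.1 hdvd n (by omega)
  rwa [map_sub, sub_eq_zero, ← hshift] at this

end ModFour

def plBarEquiv (k n : ℕ) :
    {DP : (Fin k → Multiset ℕ) × (Fin k → Multiset ℕ) //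
      (∀ i, (DP.1 i).Nodup) ∧
      (∀ i, ∀ x ∈ DP.1 i, (i : ℕ) + 1 ≤ x) ∧
      (∀ i, ∀ x ∈ DP.2 i, (i : ℕ) + 1 ≤ x) ∧
      (∑ i, (DP.1 i).sum) + (∑ i, (DP.2 i).sum) = n} ≃
    {f : ∀ i : Fin k, Row i // ∑ i : Fin k, rowWeight i (f i) = n} where
  toFun DP := ⟨fun i => (⟨DP.1.1 i, DP.2.1 i, DP.2.2.1 i⟩, ⟨DP.1.2 i, DP.2.2.2.1 i⟩), by
    simpa only [rowWeight, sum_add_distrib] using DP.2.2.2.2⟩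
  invFun f := ⟨(fun i => (f.1 i).1.1, fun i => (f.1 i).2.1), fun i => (f.1 i).1.2.1,
    fun i => (f.1 i).1.2.2, fun i => (f.1 i).2.2, by
      simpa only [rowWeight, sum_add_distrib] using f.2⟩
  left_inv _ := rfl
  right_inv _ := rfl

theorem cast_plBar_eq_coeff (R : Type*) [CommSemiring R] (k n : ℕ) :
    (plBar k n : R) = coeff n (∏ i : Fin k, weightGF R (rowWeight i)) := by
  rw [← weightGF_pi fun i => finite_fibre_rowWeight i, coeff_weightGF, plBar,
    Nat.card_congr (plBarEquiv k n)]

theorem prod_weightGF_rowWeight_fin_four :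
    ∏ i : Fin 4, weightGF (ZMod 4) (rowWeight i) =
      weightGF (ZMod 4) (unitWeight 1) + weightGF (ZMod 4) (unitWeight 3) - 1 := by
  rw [Fin.prod_univ_four]
  change weightGF _ (rowWeight 0) * weightGF _ (rowWeight 1) * weightGF _ (rowWeight 2) *
    weightGF _ (rowWeight 3) = _
  rw [weightGF_rowWeight _ 0, weightGF_rowWeight _ 2]
  calc _ = weightGF (ZMod 4) (unitWeight 1) * weightGF (ZMod 4) (unitWeight 3) *
        (weightGF (ZMod 4) (rowWeight 1) ^ 2 * weightGF (ZMod 4) (rowWeight 3) ^ 2) := by ring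
    _ = _ := by
      rw [weightGF_rowWeight_sq, weightGF_rowWeight_sq, one_mul, mul_one,
        mul_eq_add_sub_one_of_two_dvd_sub_one zmodFour_powerSeries_four_eq_zero
          (two_dvd_weightGF_unitWeight_sub_one one_pos)
          (two_dvd_weightGF_unitWeight_sub_one three_pos)]

theorem cast_plBar_four {n : ℕ} (hn : n ≠ 0) :
    (plBar 4 n : ZMod 4) = 2 + if 3 ∣ n then 2 else 0 := by
  rw [cast_plBar_eq_coeff, prod_weightGF_rowWeight_fin_four, map_sub, map_add,
    coeff_weightGF_unitWeight _ one_pos, coeff_weightGF_unitWeight _ three_pos, coeff_one]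
  simp [hn]

theorem stmt16 : ∀ n : ℕ,
    plBar 4 (4 * n + 1) + plBar 4 (4 * n + 2) + plBar 4 (4 * n + 3) ≡ 0 [MOD 4] := by
  intro n
  rw [← ZMod.natCast_eq_natCast_iff]
  push_cast
  rw [cast_plBar_four (by omega), cast_plBar_four (by omega), cast_plBar_four (by omega)]
  have : n % 3 = 0 ∨ n % 3 = 1 ∨ n % 3 = 2 := by omega
  rcases this with h | h | h <;>
    simp [Nat.dvd_iff_mod_eq_zero, Nat.add_mod, Nat.mul_mod, h] <;> decide
end

section
/- For all integers n ≥ 0, p(10n+6, 4) + p(10n+7, 4) + p(10n+8, 4) ≡ 0 (mod 5) and p(10n+2, 4) + p(10n+3, 4) + p(10n+4, 4) ≡ 0 (mod 5). -/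
def fAux : ℕ → ℕ → ℕ → ℕ
  | 0, _, _ => 0
  | _+1, 0, n => if n = 0 then 1 else 0
  | fuel+1, m+1, n => fAux fuel m n + if m+1 ≤ n then fAux fuel (m+1) (n-(m+1)) else 0
def f (m n : ℕ) : ℕ := fAux (m+n+1) m n
lemma fAux_mono : ∀ f1 : ℕ, ∀ f2 m n : ℕ, m+n < f1 → m+n < f2 → fAux f1 m n = fAux f2 m n := by
  intro f1
  induction f1 with
  | zero => omega
  | succ f1 ih =>
    intro f2 m n h1 h2
    match f2, m with
    | f2+1, 0 => rfl
    | f2+1, m+1 =>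
      simp only [fAux]
      rw [ih f2 m n (by omega) (by omega)]
      congr 1
      split
      · exact ih f2 (m+1) (n-(m+1)) (by omega) (by omega)
      · rfl
lemma f_zero (n : ℕ) : f 0 n = if n = 0 then 1 else 0 := rfl
lemma f_succ (m n : ℕ) : f (m+1) n = f m n + if m+1 ≤ n then f (m+1) (n-(m+1)) else 0 := by
  show fAux (m+1+n+1) (m+1) n = _
  simp only [fAux]
  rw [fAux_mono (m+1+n) (m+n+1) m n (by omega) (by omega)]
  congr 1
  split
  · exact fAux_mono (m+1+n) (m+1+(n-(m+1))+1) (m+1) (n-(m+1)) (by omega) (by omega)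
  · rfl
lemma f1_def (n : ℕ) : f 1 n = f 0 n + if 1 ≤ n then f 1 (n-1) else 0 := f_succ 0 n
lemma f2_def (n : ℕ) : f 2 n = f 1 n + if 2 ≤ n then f 2 (n-2) else 0 := f_succ 1 n
lemma f3_def (n : ℕ) : f 3 n = f 2 n + if 3 ≤ n then f 3 (n-3) else 0 := f_succ 2 n
lemma f4_def (n : ℕ) : f 4 n = f 3 n + if 4 ≤ n then f 4 (n-4) else 0 := f_succ 3 n
lemma f1_eq : ∀ n, f 1 n = 1 := by
  intro n
  induction n using Nat.strong_induction_on with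
  | _ n ihn =>
    match n with
    | 0 => rfl
    | n+1 =>
      rw [f1_def, f_zero, if_neg (by omega), if_pos (by omega),
        show n+1-1 = n from by omega, ihn n (by omega)]
lemma f2_eq : ∀ n, f 2 n = n / 2 + 1 := by
  intro n
  induction n using Nat.strong_induction_on with
  | _ n ihn =>
    match n with
    | 0 => rw [f2_def, f1_eq, if_neg (by omega)]
    | 1 => rw [f2_def, f1_eq, if_neg (by omega)]
    | n+2 =>
      rw [f2_def, f1_eq, if_pos (by omega), show n+2-2 = n from by omega, ihn n (by omega)]
      omega



/-- `pBound n m` is the number of partitions of `n` into parts each of size at most `m`. -/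
noncomputable def pBound (n m : ℕ) : ℕ :=
  Nat.card {μ : Multiset ℕ // (∀ x ∈ μ, 0 < x ∧ x ≤ m) ∧ μ.sum = n}

abbrev S (n m : ℕ) := {μ : Multiset ℕ // (∀ x ∈ μ, 0 < x ∧ x ≤ m) ∧ μ.sum = n}

def toPart (n m : ℕ) : S n m ↪ Nat.Partition n where
  toFun μ := ⟨μ.1, fun hi => (μ.2.1 _ hi).1, μ.2.2⟩
  inj' := by rintro ⟨a, _⟩ ⟨b, _⟩ h; simpa [Nat.Partition.ext_iff] using h

instance instFin (n m : ℕ) : Finite (S n m) := Finite.of_injective _ (toPart n m).injective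

lemma card0 (n : ℕ) : pBound n 0 = if n = 0 then 1 else 0 := by
  unfold pBound
  split
  · subst ‹n = 0›
    rw [Nat.card_eq_one_iff_unique]
    constructor
    · constructor
      rintro ⟨a, ha, hs⟩ ⟨b, hb, hs'⟩
      have : a = 0 := Multiset.eq_zero_of_forall_notMem fun x hx => by
        have := ha x hx; omega
      have : b = 0 := Multiset.eq_zero_of_forall_notMem fun x hx => by
        have := hb x hx; omega
      simp_all
    · exact ⟨⟨0, by simp⟩⟩
  · rw [Nat.card_eq_zero]
    left
    constructor
    rintro ⟨a, ha, hs⟩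
    have : a = 0 := Multiset.eq_zero_of_forall_notMem fun x hx => by
      have := ha x hx; omega
    simp_all

lemma cards (n m : ℕ) :
    pBound n (m+1) = pBound n m + if m+1 ≤ n then pBound (n-(m+1)) (m+1) else 0 := by
  have key : pBound n (m+1) =
      Nat.card {x : S n (m+1) // (m+1) ∈ x.1} + Nat.card {x : S n (m+1) // (m+1) ∉ x.1} := by
    rw [pBound, ← Nat.card_sum, Nat.card_congr (Equiv.sumCompl _)]
  have eA : {x : S n (m+1) // (m+1) ∉ x.1} ≃ S n m :=
    { toFun := fun x => ⟨x.1.1, ⟨fun y hy => by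
        have h1 := x.1.2.1 y hy
        have h2 : y ≠ m+1 := fun h => x.2 (h ▸ hy)
        omega, x.1.2.2⟩⟩
      invFun := fun x => ⟨⟨x.1, ⟨fun y hy => by have := x.2.1 y hy; omega, x.2.2⟩⟩,
        fun h => by have := x.2.1 _ h; omega⟩
      left_inv := fun x => by ext; rfl
      right_inv := fun x => by ext; rfl }
  rw [key, Nat.card_congr eA]
  split
  · next h =>
    have eB : {x : S n (m+1) // (m+1) ∈ x.1} ≃ S (n-(m+1)) (m+1) :=
      { toFun := fun x => ⟨x.1.1.erase (m+1), ⟨fun y hy => x.1.2.1 y (Multiset.mem_of_mem_erase hy),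
          by
            have := x.1.2.2
            have hc := Multiset.cons_erase x.2
            have : ((m+1) ::ₘ x.1.1.erase (m+1)).sum = n := by rw [hc]; exact x.1.2.2
            rw [Multiset.sum_cons] at this
            omega⟩⟩
        invFun := fun x => ⟨⟨(m+1) ::ₘ x.1, ⟨fun y hy => by
            rcases Multiset.mem_cons.1 hy with h | h
            · omega
            · exact x.2.1 y h, by rw [Multiset.sum_cons, x.2.2]; omega⟩⟩,
          Multiset.mem_cons_self _ _⟩
        left_inv := fun x => Subtype.ext (Subtype.ext (Multiset.cons_erase x.2))
        right_inv := fun x => Subtype.ext (Multiset.erase_cons_head _ _) }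
    rw [Nat.card_congr eB]
    have h1 : Nat.card (S (n-(m+1)) (m+1)) = pBound (n-(m+1)) (m+1) := rfl
    have h2 : Nat.card (S n m) = pBound n m := rfl
    omega
  · next h =>
    have : IsEmpty {x : S n (m+1) // (m+1) ∈ x.1} := by
      constructor
      rintro ⟨⟨a, ha, hs⟩, hm⟩
      have : m+1 ≤ a.sum := Multiset.le_sum_of_mem hm
      omega
    rw [Nat.card_of_isEmpty]
    have h2 : Nat.card (S n m) = pBound n m := rfl
    omega


lemma pBound_eq (m : ℕ) : ∀ n, pBound n m = f m n := by
  induction m with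
  | zero => intro n; rw [card0, f_zero]
  | succ m ih =>
    intro n
    induction n using Nat.strong_induction_on with
    | _ n ihn =>
      rw [cards, f_succ, ih]
      congr 1
      split
      · next h => exact ihn _ (by omega)
      · rfl

lemma B' (n k : ℕ) (hk : k = n + 6) : f 3 k = f 3 n + n + 6 := by
  subst hk
  have h1 : f 3 (n+6) = f 2 (n+6) + f 3 (n+3) := by
    rw [f3_def (n+6), if_pos (by omega), show n+6-3 = n+3 from by omega]
  have h2 : f 3 (n+3) = f 2 (n+3) + f 3 n := by
    rw [f3_def (n+3), if_pos (by omega), show n+3-3 = n from by omega]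
  rw [h1, h2, f2_eq, f2_eq]
  omega

lemma D' (n k : ℕ) (hk : k = n + 4) : f 4 k = f 3 k + f 4 n := by
  subst hk
  rw [f4_def (n+4), if_pos (by omega), show n+4-4 = n from by omega]



lemma B12 (n k : ℕ) (hk : k = n + 12) : f 3 k = f 3 n + 2*n + 18 := by
  subst hk
  have h1 := B' n (n+6) rfl
  have h2' := B' (n+6) (n+12) (by ring)
  omega

lemma B12' (n k : ℕ) (hk : k = n + 12) : f 3 k = f 3 n + 2*n + 18 := by
  have h1 := B' n (n+6) rfl
  have h2 := B' (n+6) k (by omega)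
  omega

lemma T5 (n t2 t3 t4 t5 : ℕ) (h2 : t2 = n+12) (h3 : t3 = n+24) (h4 : t4 = n+36)
    (h5 : t5 = n+48) :
    f 3 n + f 3 t2 + f 3 t3 + f 3 t4 + f 3 t5 = 5 * f 3 n + 20*n + 420 := by
  subst h2 h3 h4 h5
  have h1 := B12 n _ rfl
  have hh2 := B12' (n+12) (n+24) (by ring)
  have hh3 := B12' (n+24) (n+36) (by ring)
  have hh4 := B12' (n+36) (n+48) (by ring)
  omega

lemma E (n : ℕ) : f 4 (n+60) % 5 = f 4 n % 5 := by
  have h1 := T5 (n+4) (n+16) (n+28) (n+40) (n+52) (by ring) (by ring) (by ring) (by ring)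
  have h2 := T5 (n+8) (n+20) (n+32) (n+44) (n+56) (by ring) (by ring) (by ring) (by ring)
  have h3 := T5 (n+12) (n+24) (n+36) (n+48) (n+60) (by ring) (by ring) (by ring) (by ring)
  have hD0 : f 4 (n+4) = f 3 (n+4) + f 4 n := D' n (n+4) rfl
  have hD4 : f 4 (n+8) = f 3 (n+8) + f 4 (n+4) := D' (n+4) (n+8) (by ring)
  have hD8 : f 4 (n+12) = f 3 (n+12) + f 4 (n+8) := D' (n+8) (n+12) (by ring)
  have hD12 : f 4 (n+16) = f 3 (n+16) + f 4 (n+12) := D' (n+12) (n+16) (by ring)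
  have hD16 : f 4 (n+20) = f 3 (n+20) + f 4 (n+16) := D' (n+16) (n+20) (by ring)
  have hD20 : f 4 (n+24) = f 3 (n+24) + f 4 (n+20) := D' (n+20) (n+24) (by ring)
  have hD24 : f 4 (n+28) = f 3 (n+28) + f 4 (n+24) := D' (n+24) (n+28) (by ring)
  have hD28 : f 4 (n+32) = f 3 (n+32) + f 4 (n+28) := D' (n+28) (n+32) (by ring)
  have hD32 : f 4 (n+36) = f 3 (n+36) + f 4 (n+32) := D' (n+32) (n+36) (by ring)
  have hD36 : f 4 (n+40) = f 3 (n+40) + f 4 (n+36) := D' (n+36) (n+40) (by ring)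
  have hD40 : f 4 (n+44) = f 3 (n+44) + f 4 (n+40) := D' (n+40) (n+44) (by ring)
  have hD44 : f 4 (n+48) = f 3 (n+48) + f 4 (n+44) := D' (n+44) (n+48) (by ring)
  have hD48 : f 4 (n+52) = f 3 (n+52) + f 4 (n+48) := D' (n+48) (n+52) (by ring)
  have hD52 : f 4 (n+56) = f 3 (n+56) + f 4 (n+52) := D' (n+52) (n+56) (by ring)
  have hD56 : f 4 (n+60) = f 3 (n+60) + f 4 (n+56) := D' (n+56) (n+60) (by ring)
  omega

set_option maxRecDepth 8000 in
lemma bigF_0a : (f 4 6 + f 4 7 + f 4 8) % 5 = 0 := by simp [f4_def, f3_def, f2_eq]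

set_option maxRecDepth 8000 in
lemma bigF_0b : (f 4 2 + f 4 3 + f 4 4) % 5 = 0 := by simp [f4_def, f3_def, f2_eq]

set_option maxRecDepth 8000 in
lemma bigF_1a : (f 4 16 + f 4 17 + f 4 18) % 5 = 0 := by simp [f4_def, f3_def, f2_eq]

set_option maxRecDepth 8000 in
lemma bigF_1b : (f 4 12 + f 4 13 + f 4 14) % 5 = 0 := by simp [f4_def, f3_def, f2_eq]

set_option maxRecDepth 8000 in
lemma bigF_2a : (f 4 26 + f 4 27 + f 4 28) % 5 = 0 := by simp [f4_def, f3_def, f2_eq]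

set_option maxRecDepth 8000 in
lemma bigF_2b : (f 4 22 + f 4 23 + f 4 24) % 5 = 0 := by simp [f4_def, f3_def, f2_eq]

set_option maxRecDepth 8000 in
lemma bigF_3a : (f 4 36 + f 4 37 + f 4 38) % 5 = 0 := by simp [f4_def, f3_def, f2_eq]

set_option maxRecDepth 8000 in
lemma bigF_3b : (f 4 32 + f 4 33 + f 4 34) % 5 = 0 := by simp [f4_def, f3_def, f2_eq]

set_option maxRecDepth 8000 in
lemma bigF_4a : (f 4 46 + f 4 47 + f 4 48) % 5 = 0 := by simp [f4_def, f3_def, f2_eq]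

set_option maxRecDepth 8000 in
lemma bigF_4b : (f 4 42 + f 4 43 + f 4 44) % 5 = 0 := by simp [f4_def, f3_def, f2_eq]

set_option maxRecDepth 8000 in
lemma bigF_5a : (f 4 56 + f 4 57 + f 4 58) % 5 = 0 := by simp [f4_def, f3_def, f2_eq]

set_option maxRecDepth 8000 in
lemma bigF_5b : (f 4 52 + f 4 53 + f 4 54) % 5 = 0 := by simp [f4_def, f3_def, f2_eq]

lemma main4 : ∀ n : ℕ, (f 4 (10*n+6) + f 4 (10*n+7) + f 4 (10*n+8)) % 5 = 0 ∧
    (f 4 (10*n+2) + f 4 (10*n+3) + f 4 (10*n+4)) % 5 = 0 := by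
  intro n
  induction n using Nat.strong_induction_on with
  | _ n ihn =>
    by_cases h : n < 6
    · interval_cases n
      · norm_num
        exact ⟨bigF_0a, bigF_0b⟩
      · norm_num
        exact ⟨bigF_1a, bigF_1b⟩
      · norm_num
        exact ⟨bigF_2a, bigF_2b⟩
      · norm_num
        exact ⟨bigF_3a, bigF_3b⟩
      · norm_num
        exact ⟨bigF_4a, bigF_4b⟩
      · norm_num
        exact ⟨bigF_5a, bigF_5b⟩
    · obtain ⟨m, rfl⟩ : ∃ m, n = m + 6 := ⟨n - 6, by omega⟩
      obtain ⟨ih1, ih2⟩ := ihn m (by omega)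
      have e1 := E (10*m+6)
      have e2 := E (10*m+7)
      have e3 := E (10*m+8)
      have e4 := E (10*m+2)
      have e5 := E (10*m+3)
      have e6 := E (10*m+4)
      have r1 : 10*(m+6)+6 = 10*m+6+60 := by ring
      have r2 : 10*(m+6)+7 = 10*m+7+60 := by ring
      have r3 : 10*(m+6)+8 = 10*m+8+60 := by ring
      have r4 : 10*(m+6)+2 = 10*m+2+60 := by ring
      have r5 : 10*(m+6)+3 = 10*m+3+60 := by ring
      have r6 : 10*(m+6)+4 = 10*m+4+60 := by ring
      rw [r1, r2, r3, r4, r5, r6]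
      omega

theorem stmt19 : ∀ n : ℕ,
    pBound (10 * n + 6) 4 + pBound (10 * n + 7) 4 + pBound (10 * n + 8) 4 ≡ 0 [MOD 5] ∧
    pBound (10 * n + 2) 4 + pBound (10 * n + 3) 4 + pBound (10 * n + 4) 4 ≡ 0 [MOD 5] := by
  intro n
  obtain ⟨h1, h2⟩ := main4 n
  simp only [pBound_eq 4]
  constructor <;> · show _ % 5 = 0 % 5; omega
end
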